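/- arXiv:2207.00863 — 3 statements merged into one kernel-verified Lean document; each statement's English description precedes it below -/
import Mathlib

section
/- Let λ ∈ Γ_k ⊂ ℝ^n and let integers k, l, r, s satisfy k > l ≥ 0, r > s ≥ 0, k ≥ r and l ≥ s. Then [ (σ_k(λ)/C_n^k) / (σ_l(λ)/C_n^l) ]^{1/(k−l)} ≤ [ (σ_r(λ)/C_n^r) / (σ_s(λ)/C_n^s) ]^{1/(r−s)}, where C_n^m = binomial(n, m) (generalized Newton–MacLaurin inequality). -/
/-!
Write `E_m = σ_m / C_n^m`. Newton's inequality `E_m E_{m+2} ≤ E_{m+1}²` holds for every real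
`λ`: differentiating `∏ (X - λ_i)` leaves all roots real (Rolle) and keeps every `E_j` with
`j < n`, which reduces it to `n = m + 2`. There, with `a_i = ∏_{j ≠ i} λ_j`, one has
`σ_{n-1} = ∑ a_i` and `2 σ_{n-2} σ_n = (∑ a_i)² - ∑ a_i²`, so it is Cauchy–Schwarz.
On `Γ_k` the `E_m` with `m ≤ k` are positive, so `m ↦ log E_m` is concave on `{0, …, k}`; after
taking logarithms the claim says that its chord over `[l, k]` is no steeper than its chord over
`[s, r]`, which lies to the left.
-/

open scoped BigOperators Topology
open MeasureTheory

noncomputable section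

abbrev E (n : ℕ) := EuclideanSpace ℝ (Fin n)

/-- the `m`-th elementary symmetric polynomial of `lam : Fin n → ℝ` -/
def esym (n m : ℕ) (lam : Fin n → ℝ) : ℝ :=
  ∑ s ∈ Finset.univ.powersetCard m, ∏ i ∈ s, lam i

/-- the Gårding cone `Γ_k` -/
def GCone (n k : ℕ) : Set (Fin n → ℝ) :=
  {lam | ∀ m, 1 ≤ m → m ≤ k → 0 < esym n m lam}

/-- partial derivative `∂u/∂x_i` -/
def pd {n : ℕ} (u : E n → ℝ) (i : Fin n) (x : E n) : ℝ :=
  fderiv ℝ u x (EuclideanSpace.single i 1)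

/-- gradient vector `Du` -/
def gradVec {n : ℕ} (u : E n → ℝ) (x : E n) : E n :=
  WithLp.toLp 2 (fun i => pd u i x)

/-- Hessian matrix `D²u` -/
def hess {n : ℕ} (u : E n → ℝ) (x : E n) : Matrix (Fin n) (Fin n) ℝ :=
  Matrix.of fun i j => pd (pd u j) i x

/-- `w = √(1+|Du|²)` -/
def wgt {n : ℕ} (u : E n → ℝ) (x : E n) : ℝ :=
  Real.sqrt (1 + ∑ i, (pd u i x) ^ 2)

/-- the matrix `γ^{ij} = δ_{ij} - u_i u_j/(w(1+w))` -/
def gam {n : ℕ} (u : E n → ℝ) (x : E n) : Matrix (Fin n) (Fin n) ℝ :=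
  Matrix.of fun i j =>
    (if i = j then (1:ℝ) else 0) - pd u i x * pd u j x / (wgt u x * (1 + wgt u x))

/-- the curvature matrix `A = (1/w) γ D²u γ`, whose eigenvalues are `κ[M_u]` -/
def curvMat {n : ℕ} (u : E n → ℝ) (x : E n) : Matrix (Fin n) (Fin n) ℝ :=
  (wgt u x)⁻¹ • (gam u x * hess u x * gam u x)

/-- Frobenius norm of the second fundamental form `h_{ij} = u_{ij}/w` -/
def sffNorm {n : ℕ} (u : E n → ℝ) (x : E n) : ℝ :=
  Real.sqrt (∑ i, ∑ j, (hess u x i j / wgt u x) ^ 2)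

/-- the eigenvalue vector of the symmetric matrix `A` lies in `S` -/
def EigsIn {n : ℕ} (A : Matrix (Fin n) (Fin n) ℝ) (S : Set (Fin n → ℝ)) : Prop :=
  ∃ hA : A.IsHermitian, hA.eigenvalues ∈ S

/-- the eigenvalue vector of `A` lies in `S` and `σ_k` of it equals `c` -/
def SigmaEig {n : ℕ} (k : ℕ) (A : Matrix (Fin n) (Fin n) ℝ) (S : Set (Fin n → ℝ)) (c : ℝ) : Prop :=
  ∃ hA : A.IsHermitian, hA.eigenvalues ∈ S ∧ esym n k hA.eigenvalues = c

open Finset Polynomial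

lemma sq_sum_eq_sum_sq_add_two_mul_sum_pairs {ι : Type*} [DecidableEq ι] (s : Finset ι)
    (f : ι → ℝ) :
    (∑ i ∈ s, f i) ^ 2 = ∑ i ∈ s, f i ^ 2 + 2 * ∑ t ∈ s.powersetCard 2, ∏ i ∈ t, f i := by
  induction s using Finset.induction with
  | empty => rw [powersetCard_eq_empty.2 (by simp)]; simp
  | @insert a s ha ih =>
    have hpairs : ∑ t ∈ s.powersetCard 1, ∏ i ∈ insert a t, f i = f a * ∑ i ∈ s, f i := by
      rw [mul_sum, powersetCard_one, sum_map]
      refine sum_congr rfl fun i hi => ?_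
      rw [Function.Embedding.coeFn_mk,
        prod_insert (by rw [mem_singleton]; rintro rfl; exact ha hi), prod_singleton]
    rw [sum_insert ha, sum_insert ha, powersetCard_succ_insert ha, sum_union, sum_image, hpairs]
    · linear_combination ih
    · intro t ht u hu h
      have hta : a ∉ t := fun h' => ha ((mem_powersetCard.1 ht).1 h')
      have hua : a ∉ u := fun h' => ha ((mem_powersetCard.1 hu).1 h')
      simpa [erase_insert, hta, hua] using congrArg (·.erase a) h
    · refine disjoint_left.2 fun t ht ht' => ?_
      obtain ⟨u, -, rfl⟩ := mem_image.1 ht'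
      exact ha ((mem_powersetCard.1 ht).1 (mem_insert_self a u))

section FintypeIndex

variable {ι : Type*} [Fintype ι] [DecidableEq ι]

lemma sum_powersetCard_prod_eq_sum_prod_compl (f : ι → ℝ) {j k : ℕ}
    (hjk : j + k = Fintype.card ι) :
    ∑ t ∈ (univ : Finset ι).powersetCard j, ∏ i ∈ t, f i
      = ∑ t ∈ (univ : Finset ι).powersetCard k, ∏ i ∈ tᶜ, f i := by
  refine sum_nbij' (fun t => tᶜ) (fun t => tᶜ) ?_ ?_ (fun t _ => compl_compl t)
    (fun t _ => compl_compl t) (fun t _ => by rw [compl_compl])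
  all_goals
    intro t ht
    simp only [mem_powersetCard_univ, card_compl] at ht ⊢
    omega

lemma prod_compl_singleton_mul_prod_compl_singleton (f : ι → ℝ) {i j : ι} (hij : i ≠ j) :
    (∏ x ∈ {i}ᶜ, f x) * ∏ x ∈ {j}ᶜ, f x = (∏ x, f x) * ∏ x ∈ {i, j}ᶜ, f x := by
  have hj : j ∈ ({i}ᶜ : Finset ι) := by simp [hij.symm]
  have hi : i ∈ ({j}ᶜ : Finset ι) := by simp [hij]
  have hi_erase : ({i}ᶜ : Finset ι).erase j = {i, j}ᶜ := by
    ext x; simp [and_comm]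
  have hj_erase : ({j}ᶜ : Finset ι).erase i = {i, j}ᶜ := by
    ext x; simp
  rw [← mul_prod_erase _ f hj, ← mul_prod_erase _ f hi, hi_erase, hj_erase,
    ← mul_prod_erase _ f (mem_univ i), ← compl_singleton, ← mul_prod_erase _ f hj, hi_erase]
  ring

lemma esymm_map_univ_mul_esymm_le_of_card_eq (f : ι → ℝ) {m : ℕ}
    (hm : Fintype.card ι = m + 2) :
    2 * (m + 2 : ℝ) * ((univ.val.map f).esymm m * (univ.val.map f).esymm (m + 2))
      ≤ (m + 1 : ℝ) * (univ.val.map f).esymm (m + 1) ^ 2 := by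
  set a : ι → ℝ := fun i => ∏ x ∈ {i}ᶜ, f x
  simp only [esymm_map_val]
  have h_top : ∑ t ∈ (univ : Finset ι).powersetCard (m + 2), ∏ i ∈ t, f i = ∏ i, f i := by
    rw [← hm, ← card_univ, powersetCard_self, sum_singleton]
  have h_sub1 : ∑ t ∈ (univ : Finset ι).powersetCard (m + 1), ∏ i ∈ t, f i = ∑ i, a i := by
    rw [sum_powersetCard_prod_eq_sum_prod_compl f (k := 1) (by omega), powersetCard_one, sum_map]
    rfl
  have h_sub2 : 2 * ((∑ t ∈ (univ : Finset ι).powersetCard m, ∏ i ∈ t, f i) * ∏ i, f i)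
      = (∑ i, a i) ^ 2 - ∑ i, a i ^ 2 := by
    rw [sum_powersetCard_prod_eq_sum_prod_compl f (k := 2) (by omega),
      sq_sum_eq_sum_sq_add_two_mul_sum_pairs, sum_mul]
    have hpair : ∀ t ∈ (univ : Finset ι).powersetCard 2,
        (∏ i ∈ tᶜ, f i) * ∏ x, f x = ∏ i ∈ t, a i := by
      intro t ht
      obtain ⟨i, j, hij, rfl⟩ := card_eq_two.1 (mem_powersetCard_univ.1 ht)
      rw [prod_pair hij, prod_compl_singleton_mul_prod_compl_singleton f hij, mul_comm]
    rw [sum_congr rfl hpair]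
    ring
  have h_cs : (∑ i, a i) ^ 2 ≤ (m + 2 : ℝ) * ∑ i, a i ^ 2 := by
    have := sq_sum_le_card_mul_sum_sq (s := (univ : Finset ι)) (f := a)
    rwa [card_univ, hm, Nat.cast_add, Nat.cast_two] at this
  rw [h_top, h_sub1]
  nlinarith [h_sub2, h_cs]

end FintypeIndex

namespace Multiset

def esymmMean (s : Multiset ℝ) (j : ℕ) : ℝ := s.esymm j / (card s).choose j

lemma esymm_mul_esymm_le_of_card_eq {s : Multiset ℝ} {m : ℕ} (hs : card s = m + 2) :
    2 * (m + 2 : ℝ) * (s.esymm m * s.esymm (m + 2)) ≤ (m + 1 : ℝ) * s.esymm (m + 1) ^ 2 := by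
  classical
  have := esymm_map_univ_mul_esymm_le_of_card_eq (fun x : s => (x : ℝ))
    (m := m) (by rwa [card_coe])
  rwa [map_univ_coe] at this

/-- Differentiating `∏ (X - a)` keeps all roots real (Rolle) and preserves every `esymmMean`. -/
lemma exists_esymmMean_eq_of_card_eq_succ {s : Multiset ℝ} {n : ℕ} (hs : card s = n + 1) :
    ∃ t : Multiset ℝ, card t = n ∧ ∀ j ≤ n, t.esymmMean j = s.esymmMean j := by
  set f : ℝ[X] := (s.map fun a => X - C a).prod
  have hf_roots : f.roots = s := roots_multiset_prod_X_sub_C s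
  have hf_deg : f.natDegree = n + 1 := by rw [natDegree_multiset_prod_X_sub_C_eq_card, hs]
  have hf_coeff (j : ℕ) (hj : j ≤ n + 1) : f.coeff (n + 1 - j) = (-1) ^ j * s.esymm j := by
    rw [prod_X_sub_C_coeff s (by omega), hs, Nat.sub_sub_self hj]
  set g := derivative f
  have hg_lead : g.coeff n = n + 1 := by
    rw [coeff_derivative, ← hf_deg, ← leadingCoeff, (monic_multiset_prod_of_monic _ _
      fun a _ => monic_X_sub_C a).leadingCoeff]
    ring
  have hg_deg : g.natDegree = n := by
    refine le_antisymm ?_ (le_natDegree_of_ne_zero (by rw [hg_lead]; positivity))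
    exact (natDegree_derivative_le f).trans (by rw [hf_deg]; omega)
  have hg_roots : card g.roots = g.natDegree := by
    refine le_antisymm (card_roots' g) ?_
    have : card f.roots ≤ card g.roots + 1 := card_roots_le_derivative f
    rw [hf_roots, hs] at this
    omega
  refine ⟨g.roots, hg_roots.trans hg_deg, fun j hj => ?_⟩
  have hg_coeff := coeff_eq_esymm_roots_of_card hg_roots (k := n - j) (by omega)
  rw [coeff_derivative, show n - j + 1 = n + 1 - j by omega, hf_coeff j (by omega), hg_deg,
    leadingCoeff, hg_deg, hg_lead, Nat.sub_sub_self hj] at hg_coeff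
  have hchoose : (n.choose j : ℝ) * (n + 1) = (n + 1).choose j * ((n - j : ℕ) + 1) := by
    rw [← Nat.cast_succ, ← Nat.cast_succ, ← Nat.cast_mul, ← Nat.cast_mul, Nat.choose_mul_succ_eq,
      show n + 1 - j = n - j + 1 by omega]
  unfold esymmMean
  rw [hg_roots, hg_deg, hs, div_eq_div_iff (Nat.cast_ne_zero.2 (Nat.choose_pos hj).ne')
    (Nat.cast_ne_zero.2 (Nat.choose_pos (by omega)).ne')]
  refine mul_left_cancel₀ (by positivity : ((n : ℝ) + 1) * (-1) ^ j ≠ 0) ?_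
  linear_combination (-((n + 1).choose j : ℝ)) * hg_coeff - (-1) ^ j * s.esymm j * hchoose

lemma esymmMean_mul_le_sq_of_card_eq {s : Multiset ℝ} {m : ℕ} (hs : card s = m + 2) :
    s.esymmMean m * s.esymmMean (m + 2) ≤ s.esymmMean (m + 1) ^ 2 := by
  have h := esymm_mul_esymm_le_of_card_eq hs
  have hC : ((m + 2).choose m : ℝ) = (m + 2) * (m + 1) / 2 := by
    rw [Nat.choose_symm_add, Nat.cast_choose_two]; push_cast; ring
  unfold esymmMean
  rw [hs, hC, Nat.choose_self, Nat.choose_succ_self_right, div_mul_div_comm, div_pow,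
    div_le_div_iff₀ (by positivity) (by positivity)]
  push_cast
  nlinarith [h]

/-- **Newton's inequality**; for `card s < m + 2` it holds because `esymmMean s (m + 2) = 0`. -/
theorem esymmMean_mul_le_sq (s : Multiset ℝ) (m : ℕ) :
    s.esymmMean m * s.esymmMean (m + 2) ≤ s.esymmMean (m + 1) ^ 2 := by
  rcases lt_or_ge (card s) (m + 2) with hlt | hle
  · rw [esymmMean, esymmMean, Nat.choose_eq_zero_of_lt hlt, Nat.cast_zero, div_zero, mul_zero]
    positivity
  obtain ⟨d, hd⟩ := Nat.exists_eq_add_of_le hle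
  induction d generalizing s with
  | zero => exact esymmMean_mul_le_sq_of_card_eq hd
  | succ d ih =>
    obtain ⟨t, ht, hts⟩ := exists_esymmMean_eq_of_card_eq_succ (n := m + 2 + d) hd
    rw [← hts m (by omega), ← hts (m + 1) (by omega), ← hts (m + 2) (by omega)]
    exact ih t (by omega) ht

end Multiset

def ConcaveSeqUpTo (g : ℕ → ℝ) (K : ℕ) : Prop :=
  ∀ m, m + 2 ≤ K → g m + g (m + 2) ≤ 2 * g (m + 1)

namespace ConcaveSeqUpTo

variable {g : ℕ → ℝ} {K : ℕ}

lemma succ_sub_le (hg : ConcaveSeqUpTo g K) {i j : ℕ} (hij : i ≤ j) (hjK : j + 1 ≤ K) :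
    g (j + 1) - g j ≤ g (i + 1) - g i := by
  induction j, hij using Nat.le_induction with
  | base => rfl
  | succ j hij ih =>
    have := hg j (by omega)
    linarith [ih (by omega)]

lemma three_chord (hg : ConcaveSeqUpTo g K) {a b c : ℕ} (hab : a ≤ b) (hbc : b ≤ c)
    (hcK : c ≤ K) :
    ((b : ℝ) - a) * (g c - g b) ≤ ((c : ℝ) - b) * (g b - g a) := by
  calc ((b : ℝ) - a) * (g c - g b)
      = ∑ _i ∈ Ico a b, ∑ j ∈ Ico b c, (g (j + 1) - g j) := by
        rw [sum_const, sum_Ico_sub g hbc, Nat.card_Ico, nsmul_eq_mul, Nat.cast_sub hab]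
    _ ≤ ∑ i ∈ Ico a b, ∑ _j ∈ Ico b c, (g (i + 1) - g i) := by
        refine sum_le_sum fun i hi => sum_le_sum fun j hj => ?_
        rw [mem_Ico] at hi hj
        exact hg.succ_sub_le (by omega) (by omega)
    _ = ((c : ℝ) - b) * (g b - g a) := by
        simp_rw [sum_const, Nat.card_Ico, nsmul_eq_mul, ← mul_sum]
        rw [sum_Ico_sub g hab, Nat.cast_sub hbc]

lemma slope_le (hg : ConcaveSeqUpTo g K) {s l r : ℕ} (hsr : s < r) (hlK : l < K) (hsl : s ≤ l)
    (hrK : r ≤ K) : (g K - g l) / ((K : ℝ) - l) ≤ (g r - g s) / ((r : ℝ) - s) := by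
  have cast_pos {a b : ℕ} (h : a < b) : (0 : ℝ) < (b : ℝ) - a := sub_pos.2 (by exact_mod_cast h)
  calc (g K - g l) / ((K : ℝ) - l) ≤ (g K - g s) / ((K : ℝ) - s) := by
        rw [div_le_div_iff₀ (cast_pos hlK) (cast_pos (by omega))]
        nlinarith [hg.three_chord hsl hlK.le le_rfl]
    _ ≤ (g r - g s) / ((r : ℝ) - s) := by
        rw [div_le_div_iff₀ (cast_pos (by omega)) (cast_pos hsr)]
        nlinarith [hg.three_chord hsr.le hrK le_rfl]

end ConcaveSeqUpTo

lemma concaveSeqUpTo_log_of_mul_le_sq {p : ℕ → ℝ} {K : ℕ} (hp : ∀ m ≤ K, 0 < p m)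
    (hnewton : ∀ m, m + 2 ≤ K → p m * p (m + 2) ≤ p (m + 1) ^ 2) :
    ConcaveSeqUpTo (fun m => Real.log (p m)) K := by
  intro m hm
  have h := Real.log_le_log (mul_pos (hp m (by omega)) (hp (m + 2) hm)) (hnewton m hm)
  rwa [Real.log_mul (hp m (by omega)).ne' (hp (m + 2) hm).ne', Real.log_pow, Nat.cast_two] at h

lemma esym_div_choose_eq_esymmMean (n m : ℕ) (lam : Fin n → ℝ) :
    esym n m lam / n.choose m = (univ.val.map lam).esymmMean m := by
  rw [Multiset.esymmMean, esymm_map_val, Multiset.card_map, card_val, card_univ,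
    Fintype.card_fin]
  rfl

lemma esym_div_choose_pos_of_mem_GCone {n k m : ℕ} {lam : Fin n → ℝ} (hlam : lam ∈ GCone n k)
    (hmk : m ≤ k) : 0 < esym n m lam / n.choose m := by
  rcases Nat.eq_zero_or_pos m with rfl | hm
  · simp [esym]
  have hpos := hlam m hm hmk
  have hmn : m ≤ n := by
    by_contra! hnm
    rw [esym, powersetCard_eq_empty.2 (by simpa using hnm), sum_empty] at hpos
    exact hpos.false
  exact div_pos hpos (Nat.cast_pos.2 (Nat.choose_pos hmn))

/-- **Generalized Newton–MacLaurin inequality.** For `λ ∈ Γ_k` and integers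
`k > l ≥ 0`, `r > s ≥ 0`, `k ≥ r`, `l ≥ s`:
`[(σ_k/C_n^k)/(σ_l/C_n^l)]^{1/(k-l)} ≤ [(σ_r/C_n^r)/(σ_s/C_n^s)]^{1/(r-s)}`. -/
theorem stmt6 (n k l r s : ℕ) (lam : Fin n → ℝ) (hlam : lam ∈ GCone n k)
    (hlk : l < k) (hsr : s < r) (hrk : r ≤ k) (hsl : s ≤ l) :
    ((esym n k lam / (n.choose k : ℝ)) / (esym n l lam / (n.choose l : ℝ)))
        ^ ((1 : ℝ) / ((k : ℝ) - (l : ℝ)))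
      ≤ ((esym n r lam / (n.choose r : ℝ)) / (esym n s lam / (n.choose s : ℝ)))
        ^ ((1 : ℝ) / ((r : ℝ) - (s : ℝ))) := by
  set p : ℕ → ℝ := fun m => esym n m lam / n.choose m
  have hp (m : ℕ) (hm : m ≤ k) : 0 < p m := esym_div_choose_pos_of_mem_GCone hlam hm
  have hconcave : ConcaveSeqUpTo (fun m => Real.log (p m)) k :=
    concaveSeqUpTo_log_of_mul_le_sq hp fun m _ => by
      simp only [p, esym_div_choose_eq_esymmMean]
      exact Multiset.esymmMean_mul_le_sq _ m
  have hslope := hconcave.slope_le hsr hlk hsl hrk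
  rw [Real.rpow_def_of_pos (div_pos (hp k le_rfl) (hp l hlk.le)),
    Real.rpow_def_of_pos (div_pos (hp r hrk) (hp s (by omega))), Real.exp_le_exp,
    Real.log_div (hp k le_rfl).ne' (hp l hlk.le).ne',
    Real.log_div (hp r hrk).ne' (hp s (by omega)).ne', mul_one_div, mul_one_div]
  exact hslope
end
end

section
/- Let 1 ≤ k < n, let Ω ⊂ ℝ^n, let u ∈ C^2(Ω), set w = √(1+|Du|^2) and let γ = (γ^{ij}) be the symmetric matrix with γ^{ij} = δ_{ij} − u_i u_j/(w(1+w)). If v ∈ C^2(Ω) is (k+1)-convex, i.e. λ(D^2 v(x)) ∈ Γ̄_{k+1} for all x ∈ Ω, then at every x ∈ Ω the symmetric matrix γ (D^2 v) γ satisfies λ(γ (D^2 v) γ) ∈ Γ̄_k, and moreover σ_j(λ(γ (D^2 v) γ)) ≥ w^{−2} σ_j(λ(D^2 v)) for j = 1, …, k. (Geometrically, γ (D^2 v) γ represents ∇²v − ν(v)h, the covariant Hessian of v on the graph M_u minus ν(v) times the second fundamental form, so its eigenvalues lying in Γ̄_k is the assertion λ(∇²v − ν(v)h) ∈ Γ̄_k.)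 -/
open scoped BigOperators Topology
open MeasureTheory

noncomputable section

/-!
Write `β = λ(B)` for `B = D²v`, `α = λ(γ B γ)` and `p = Du`. Since `γ (1 + p pᵀ) γ = 1` and
`det γ = 1/w`, we get `det(t + γ B γ) = w⁻² det(t (1 + p pᵀ) + B)`. Diagonalising `B`, with `q` the
coordinates of `p` in an eigenbasis, the matrix determinant lemma turns this into
`w² ∏ (t + α_i) = ∏ (t + β_i) + t ∑_i q_i² ∏_{l ≠ i} (t + β_l)`, that is
`w² σ_j(α) = σ_j(β) + ∑_i q_i² σ_j(β|i)`. For `β ∈ Γ̄_{k+1}` and `j ≤ k` every term on the right is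
nonnegative, so `σ_j(α) ≥ w⁻² σ_j(β) ≥ 0`, which places `α` in `Γ̄_k`.

The nonnegativity of `σ_j(β|i)` is the statement that `λ ∈ Γ_{j+1}` forces `σ_j(λ|i) > 0`. Write
`∏_l (X + λ_l) = (X + λ_i) g` and `s = n - 1 - j`. The `s`-th derivative of the left side is
`s! σ_{j+1}(λ + t) > 0` at every `t ≥ 0`, and by Rolle's theorem the largest root of `g^{(s)}` stays
below the largest root of `((X + λ_i) g)^{(s)}`, so `g^{(s)}(0) = s! σ_j(λ|i)` is positive as well.
-/

open Polynomial Matrix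

namespace Polynomial

lemma eval_pos_of_coeff_nonneg {p : ℝ[X]} (hp : ∀ d, 0 ≤ p.coeff d) {t : ℝ} (ht : 0 ≤ t)
    {m : ℕ} (hm : 0 < p.coeff m * t ^ m) : 0 < p.eval t := by
  rw [eval_eq_sum, sum_def]
  have hmem : m ∈ p.support := mem_support_iff.2 fun h => by simp [h] at hm
  exact Finset.sum_pos' (fun d _ => mul_nonneg (hp d) (pow_nonneg ht d)) ⟨m, hmem, hm⟩

lemma eval_pos_of_leadingCoeff_pos_of_forall_ne_zero {p : ℝ[X]} (hp : 0 < p.leadingCoeff)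
    {t : ℝ} (hroot : ∀ x, t ≤ x → p.eval x ≠ 0) : 0 < p.eval t := by
  rcases Nat.eq_zero_or_pos p.natDegree with hdeg | hdeg
  · rw [eq_C_of_natDegree_eq_zero hdeg, eval_C]
    simpa [leadingCoeff, hdeg] using hp
  obtain ⟨x, hx, htx⟩ := ((tendsto_atTop_of_leadingCoeff_nonneg p
    (natDegree_pos_iff_degree_pos.1 hdeg) hp.le).eventually_gt_atTop 0 |>.and
      (Filter.eventually_ge_atTop t)).exists
  by_contra! ht
  obtain ⟨c, hc, hc0⟩ := intermediate_value_Icc htx p.continuousOn ⟨ht, hx.le⟩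
  exact hroot c hc.1 hc0

lemma natDegree_iterate_derivative_eq (p : ℝ[X]) (m : ℕ) :
    (derivative^[m] p).natDegree = p.natDegree - m := by
  induction m with
  | zero => rfl
  | succ m ih => rw [Function.iterate_succ_apply', natDegree_derivative, ih]; omega

lemma leadingCoeff_iterate_derivative_pos {p : ℝ[X]} (hp : 0 < p.leadingCoeff) {m : ℕ}
    (hm : m ≤ p.natDegree) : 0 < (derivative^[m] p).leadingCoeff := by
  induction m with
  | zero => exact hp
  | succ m ih =>
    rw [Function.iterate_succ_apply', leadingCoeff_derivative, natDegree_iterate_derivative_eq]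
    exact mul_pos (ih (by omega)) (by norm_cast; omega)

lemma Splits.derivative_of_real {p : ℝ[X]} (hp : p.Splits) : (derivative p).Splits := by
  rw [splits_iff_card_roots] at hp ⊢
  have := card_roots_le_derivative p
  have := card_roots' (derivative p)
  rw [natDegree_derivative] at this ⊢
  omega

lemma Splits.iterate_derivative_of_real {p : ℝ[X]} (hp : p.Splits) (m : ℕ) :
    (derivative^[m] p).Splits := by
  induction m with
  | zero => exact hp
  | succ m ih => rw [Function.iterate_succ_apply']; exact ih.derivative_of_real

lemma eval_prod_X_sub_C_pos {s : Multiset ℝ} {t : ℝ} (hs : ∀ r ∈ s, r < t) :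
    0 < ((s.map (X - C ·)).prod).eval t := by
  rw [eval_multiset_prod, Multiset.map_map]
  refine Multiset.prod_pos fun x hx => ?_
  obtain ⟨r, hr, rfl⟩ := Multiset.mem_map.1 hx
  simpa using hs r hr

lemma eval_derivative_prod_X_sub_C_pos {s : Multiset ℝ} (hs0 : s ≠ 0) {t : ℝ}
    (hs : ∀ r ∈ s, r < t) : 0 < (derivative (s.map (X - C ·)).prod).eval t := by
  induction s using Multiset.induction_on with
  | empty => exact absurd rfl hs0
  | cons a s ih =>
    have hst : ∀ r ∈ s, r < t := fun r hr => hs r (Multiset.mem_cons_of_mem hr)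
    have ha : 0 < t - a := sub_pos.2 (hs a (Multiset.mem_cons_self a s))
    have hpos := eval_prod_X_sub_C_pos hst
    rw [Multiset.map_cons, Multiset.prod_cons, derivative_mul]
    simp only [eval_add, eval_mul, derivative_sub, derivative_X, derivative_C, sub_zero, one_mul,
      eval_sub, eval_X, eval_C]
    rcases eq_or_ne s 0 with rfl | hs0'
    · simp
    · have := ih hs0' hst
      positivity

lemma Splits.eval_derivative_pos {g : ℝ[X]} (hg : g.Splits) (hlead : 0 < g.leadingCoeff)
    (hdeg : g.natDegree ≠ 0) {t : ℝ} (hroots : ∀ r ∈ g.roots, r < t) :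
    0 < (derivative g).eval t := by
  rw [hg.eq_prod_roots, derivative_C_mul, eval_mul, eval_C]
  exact mul_pos hlead (eval_derivative_prod_X_sub_C_pos (hg.roots_ne_zero hdeg) hroots)

/-- If `g(t) > 0`, then `g` increases beyond `t`, so all roots of `g` lie left of `t`, which
forces `g'(t) > 0`. -/
lemma Splits.eval_nonpos_of_greatest_critical_point {g : ℝ[X]} (hg : g.Splits)
    (hlead : 0 < g.leadingCoeff) {t : ℝ} (hcrit : (derivative g).eval t = 0)
    (hlast : ∀ x, t < x → (derivative g).eval x ≠ 0) : g.eval t ≤ 0 := by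
  by_contra! hgt
  have hdeg : g.natDegree ≠ 0 := fun h => hlast (t + 1) (by linarith) (by
    rw [derivative_of_natDegree_zero h, eval_zero])
  have hlead' : 0 < (derivative g).leadingCoeff := by
    rw [leadingCoeff_derivative]
    exact mul_pos hlead (by positivity)
  have hmono : MonotoneOn (fun x => g.eval x) (Set.Ici t) := by
    refine (strictMonoOn_of_deriv_pos (convex_Ici t) g.continuousOn fun x hx => ?_).monotoneOn
    rw [interior_Ici] at hx
    rw [Polynomial.deriv]
    exact eval_pos_of_leadingCoeff_pos_of_forall_ne_zero hlead' fun y hy =>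
      hlast y (lt_of_lt_of_le hx hy)
  refine (hg.eval_derivative_pos hlead hdeg fun r hr => ?_).ne' hcrit
  by_contra! htr
  have hle : g.eval t ≤ g.eval r := hmono Set.self_mem_Ici htr htr
  rw [(mem_roots (ne_zero_of_natDegree_gt (Nat.pos_of_ne_zero hdeg))).1 hr] at hle
  linarith

lemma Splits.eval_iterate_derivative_ne_zero_of_mul_X_add_C {q : ℝ[X]} (hq : q.Splits)
    (hlead : 0 < q.leadingCoeff) {s : ℕ} (hs : s ≤ q.natDegree) (a t₀ : ℝ)
    (hpos : ∀ t, t₀ ≤ t → 0 < (derivative^[s] (q * (X + C a))).eval t) :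
    ∀ x, t₀ ≤ x → (derivative^[s] q).eval x ≠ 0 := by
  intro x hx hx0
  have hne : derivative^[s] q ≠ 0 := fun h => by
    simpa [h] using leadingCoeff_iterate_derivative_pos hlead hs
  have hmem : x ∈ (derivative^[s] q).roots.toFinset := by simp [hne, hx0]
  set t₁ := (derivative^[s] q).roots.toFinset.max' ⟨x, hmem⟩
  have ht₁ : (derivative^[s] q).eval t₁ = 0 := by
    simpa [hne] using Finset.max'_mem _ ⟨x, hmem⟩
  have hlast : ∀ y, t₁ < y → (derivative^[s] q).eval y ≠ 0 := fun y hy hy0 =>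
    hy.not_ge (Finset.le_max' _ y (by simp [hne, hy0]))
  -- By Leibniz, `((X + a) q)^{(s)}(t₁) = s q^{(s-1)}(t₁)`, and `t₁` is the greatest critical point
  -- of the real-rooted `q^{(s-1)}`.
  have hprev : (s : ℝ) * (derivative^[s - 1] q).eval t₁ ≤ 0 := by
    rcases Nat.eq_zero_or_pos s with hs0 | hs0
    · simp [hs0]
    have hsucc : derivative^[s] q = derivative (derivative^[s - 1] q) := by
      rw [← Function.iterate_succ_apply' derivative, Nat.succ_eq_add_one, Nat.sub_add_cancel hs0]
    rw [hsucc] at ht₁ hlast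
    exact mul_nonpos_of_nonneg_of_nonpos (Nat.cast_nonneg s)
      ((hq.iterate_derivative_of_real _).eval_nonpos_of_greatest_critical_point
        (leadingCoeff_iterate_derivative_pos hlead (by omega)) ht₁ hlast)
  have := hpos t₁ (hx.trans (Finset.le_max' _ x hmem))
  rw [mul_add, mul_comm q (C a), iterate_map_add, iterate_derivative_mul_X,
    iterate_derivative_C_mul] at this
  simp only [eval_add, eval_mul, eval_C, eval_X, eval_natCast, ht₁, nsmul_eq_mul] at this
  linarith

end Polynomial

lemma nonneg_of_mem_closure_of_pos {α : Type*} [TopologicalSpace α] {f : α → ℝ}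
    (hf : Continuous f) {S : Set α} (hpos : ∀ x ∈ S, 0 < f x) {x : α} (hx : x ∈ closure S) :
    0 ≤ f x :=
  closure_lt_subset_le continuous_const hf (closure_mono (fun y hy => hpos y hy) hx)

section GardingCone

variable {n : ℕ}

lemma esym_zero_right (lam : Fin n → ℝ) : esym n 0 lam = 1 := by
  simp [esym]

lemma continuous_esym (m : ℕ) : Continuous (esym n m) := by
  unfold esym
  fun_prop

lemma antitone_GCone : Antitone (GCone n) :=
  fun _ _ hkl _ h m hm1 hmk => h m hm1 (hmk.trans hkl)

lemma esym_pos_of_mem_GCone {k m : ℕ} {lam : Fin n → ℝ} (h : lam ∈ GCone n k) (hm : m ≤ k) :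
    0 < esym n m lam := by
  rcases Nat.eq_zero_or_pos m with rfl | hm0
  · simp [esym_zero_right]
  · exact h m hm0 hm

lemma esym_nonneg_of_mem_closure_GCone {k m : ℕ} {lam : Fin n → ℝ}
    (h : lam ∈ closure (GCone n k)) (hm : m ≤ k) : 0 ≤ esym n m lam :=
  nonneg_of_mem_closure_of_pos (continuous_esym m) (fun _ hy => esym_pos_of_mem_GCone hy hm) h

lemma natDegree_prod_X_add_C {ι : Type*} (s : Finset ι) (lam : ι → ℝ) :
    (∏ l ∈ s, (X + C (lam l))).natDegree = s.card := by
  rw [natDegree_prod_of_monic _ _ fun l _ => monic_X_add_C (lam l)]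
  simp

lemma coeff_prod_X_add_C {d : ℕ} (lam : Fin n → ℝ) (hd : d ≤ n) :
    (∏ l, (X + C (lam l))).coeff d = esym n (n - d) lam := by
  rw [Finset.prod_X_add_C_coeff _ _ (by simpa using hd)]
  simp [esym]

lemma eval_hasseDeriv_prod_X_add_C {d : ℕ} (lam : Fin n → ℝ) (hd : d ≤ n) (t : ℝ) :
    (hasseDeriv d (∏ l, (X + C (lam l)))).eval t = esym n (n - d) (fun l => lam l + t) := by
  rw [← taylor_coeff, ← coeff_prod_X_add_C _ hd, taylor_apply, prod_comp]
  simp [add_comm, add_left_comm]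

lemma eval_iterate_derivative_prod_X_add_C {s : ℕ} (lam : Fin n → ℝ) (hs : s ≤ n) (t : ℝ) :
    (derivative^[s] (∏ l, (X + C (lam l)))).eval t
      = s.factorial * esym n (n - s) (fun l => lam l + t) := by
  rw [← factorial_smul_hasseDeriv, LinearMap.smul_apply, eval_smul,
    eval_hasseDeriv_prod_X_add_C _ hs, nsmul_eq_mul]

/-- By Taylor expansion, `σ_k(λ + t) = ∑_{m ≤ k} binom(n - m, k - m) σ_m(λ) t^{k - m}`. -/
lemma esym_add_const_pos {k : ℕ} (hk : k ≤ n) {lam : Fin n → ℝ}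
    (hnn : ∀ m ≤ k, 0 ≤ esym n m lam) {t : ℝ} (ht : 0 ≤ t) (hpos : 0 < t ∨ 0 < esym n k lam) :
    0 < esym n k (fun l => lam l + t) := by
  rw [← Nat.sub_sub_self hk, ← eval_hasseDeriv_prod_X_add_C _ (Nat.sub_le n k)]
  have hcoeff (d : ℕ) : (hasseDeriv (n - k) (∏ l, (X + C (lam l)))).coeff d
      = ((d + (n - k)).choose (n - k) : ℝ) * (∏ l, (X + C (lam l))).coeff (d + (n - k)) :=
    hasseDeriv_coeff _ _ d
  refine eval_pos_of_coeff_nonneg (fun d => ?_) ht (m := if 0 < t then k else 0) ?_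
  · rw [hcoeff]
    rcases le_or_gt (d + (n - k)) n with hdn | hdn
    · rw [coeff_prod_X_add_C _ hdn]
      exact mul_nonneg (Nat.cast_nonneg _) (hnn _ (by omega))
    · rw [coeff_eq_zero_of_natDegree_lt (by rw [natDegree_prod_X_add_C]; simpa using hdn),
        mul_zero]
  · split_ifs with ht0
    · rw [hcoeff, Nat.add_sub_cancel' hk, coeff_prod_X_add_C _ le_rfl, Nat.sub_self,
        esym_zero_right, mul_one]
      have : 0 < n.choose (n - k) := Nat.choose_pos (Nat.sub_le n k)
      positivity
    · rw [hcoeff, zero_add, coeff_prod_X_add_C _ (Nat.sub_le n k), Nat.sub_sub_self hk,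
        Nat.choose_self, Nat.cast_one, one_mul, pow_zero, mul_one]
      exact hpos.resolve_left ht0

lemma mem_closure_GCone {k : ℕ} (hk : k ≤ n) {lam : Fin n → ℝ}
    (h : ∀ m, 1 ≤ m → m ≤ k → 0 ≤ esym n m lam) : lam ∈ closure (GCone n k) := by
  have hnn : ∀ m ≤ k, 0 ≤ esym n m lam := fun m hm => by
    rcases Nat.eq_zero_or_pos m with rfl | hm0
    · simp [esym_zero_right]
    · exact h m hm0 hm
  refine mem_closure_of_tendsto (b := Filter.atTop) (f := fun N : ℕ => fun l => lam l + 1 / (N + 1))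
    ?_ (Filter.Eventually.of_forall fun N m hm1 hmk => ?_)
  · rw [tendsto_pi_nhds]
    intro l
    simpa using (tendsto_const_nhds (x := lam l)).add tendsto_one_div_add_atTop_nhds_zero_nat
  · exact esym_add_const_pos (hmk.trans hk) (fun m' hm' => hnn m' (hm'.trans hmk))
      (by positivity) (Or.inl (by positivity))

/-- `σ_j(λ|i)` -/
def esymErase (n : ℕ) (i : Fin n) (j : ℕ) (lam : Fin n → ℝ) : ℝ :=
  ∑ s ∈ (Finset.univ.erase i).powersetCard j, ∏ l ∈ s, lam l

lemma continuous_esymErase (i : Fin n) (j : ℕ) : Continuous (esymErase n i j) := by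
  unfold esymErase
  fun_prop

lemma card_univ_erase (i : Fin n) : (Finset.univ.erase i).card = n - 1 := by
  simp [Finset.card_erase_of_mem]

lemma coeff_prod_erase_X_add_C {d : ℕ} (lam : Fin n → ℝ) (i : Fin n) (hd : d ≤ n - 1) :
    (∏ l ∈ Finset.univ.erase i, (X + C (lam l))).coeff d = esymErase n i (n - 1 - d) lam := by
  rw [Finset.prod_X_add_C_coeff _ _ (by rwa [card_univ_erase]), card_univ_erase]
  rfl

theorem esymErase_pos_of_mem_GCone {j : ℕ} (hjn : j < n) {lam : Fin n → ℝ}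
    (hlam : lam ∈ GCone n (j + 1)) (i : Fin n) : 0 < esymErase n i j lam := by
  set q : ℝ[X] := ∏ l ∈ Finset.univ.erase i, (X + C (lam l))
  set s := n - 1 - j
  have hq_lead : 0 < q.leadingCoeff := by
    rw [(monic_prod_of_monic _ _ fun l _ => monic_X_add_C (lam l)).leadingCoeff]
    exact one_pos
  have hs : s ≤ q.natDegree := by rw [natDegree_prod_X_add_C, card_univ_erase]; omega
  have hf : ∀ t, 0 ≤ t → 0 < (derivative^[s] (q * (X + C (lam i)))).eval t := by
    intro t ht
    rw [Finset.prod_erase_mul _ _ (Finset.mem_univ i),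
      eval_iterate_derivative_prod_X_add_C _ (by omega), show n - s = j + 1 by omega]
    exact mul_pos (by positivity) (esym_add_const_pos hjn (fun m hm =>
      (esym_pos_of_mem_GCone hlam hm).le) ht (Or.inr (esym_pos_of_mem_GCone hlam le_rfl)))
  have h0 := eval_pos_of_leadingCoeff_pos_of_forall_ne_zero
    (leadingCoeff_iterate_derivative_pos hq_lead hs)
    ((Splits.prod fun l _ => Splits.X_add_C (lam l)).eval_iterate_derivative_ne_zero_of_mul_X_add_C
      hq_lead hs (lam i) 0 hf)
  rw [← coeff_zero_eq_eval_zero, coeff_iterate_derivative, zero_add,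
    coeff_prod_erase_X_add_C _ _ (by omega), show n - 1 - s = j by omega, nsmul_eq_mul] at h0
  exact pos_of_mul_pos_right h0 (Nat.cast_nonneg _)

lemma esymErase_nonneg_of_mem_closure_GCone {j : ℕ} (hjn : j < n) {lam : Fin n → ℝ}
    (hlam : lam ∈ closure (GCone n (j + 1))) (i : Fin n) : 0 ≤ esymErase n i j lam :=
  nonneg_of_mem_closure_of_pos (continuous_esymErase i j)
    (fun _ hy => esymErase_pos_of_mem_GCone hjn hy i) hlam

end GardingCone

section GammaConjugation

variable {ι : Type*} [DecidableEq ι]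

-- For `w² = 1 + |p|²` this is `(1 + p pᵀ)^{-1/2}`.
def gammaMat (p : ι → ℝ) (w : ℝ) : Matrix ι ι ℝ :=
  1 - (w * (1 + w))⁻¹ • vecMulVec p p

lemma isHermitian_gammaMat (p : ι → ℝ) (w : ℝ) : (gammaMat p w).IsHermitian :=
  IsHermitian.ext fun i j => by
    by_cases hij : i = j
    · simp [gammaMat, hij]
    · simp [gammaMat, vecMulVec_apply, one_apply_ne hij, one_apply_ne (Ne.symm hij), mul_comm]

variable [Fintype ι]

lemma Matrix.IsHermitian.gammaMat_mul_mul {B : Matrix ι ι ℝ} (hB : B.IsHermitian) (p : ι → ℝ)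
    (w : ℝ) : (gammaMat p w * B * gammaMat p w).IsHermitian := by
  have h := isHermitian_conjTranspose_mul_mul (gammaMat p w) hB
  rwa [(isHermitian_gammaMat p w).eq] at h

lemma Matrix.IsHermitian.det_smul_one_add {A : Matrix ι ι ℝ} (hA : A.IsHermitian) (t : ℝ) :
    (t • 1 + A).det = ∏ i, (t + hA.eigenvalues i) := by
  have h := congrArg (eval (-t)) hA.charpoly_eq
  rw [eval_charpoly, eval_prod] at h
  have hneg : scalar ι (-t) - A = -(t • 1 + A) := by
    rw [neg_add, ← neg_smul, scalar_apply, smul_one_eq_diagonal, sub_eq_add_neg]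
  simp only [hneg, det_neg, eval_sub, eval_X, eval_C, RCLike.ofReal_real_eq_id, id,
    show ∀ i, -t - hA.eigenvalues i = -(t + hA.eigenvalues i) from fun i => by ring,
    Finset.prod_neg] at h
  exact mul_left_cancel₀ (pow_ne_zero _ (by norm_num)) h

lemma Matrix.IsHermitian.star_eigenvectorUnitary_mul_mul {B : Matrix ι ι ℝ} (hB : B.IsHermitian) :
    star (hB.eigenvectorUnitary : Matrix ι ι ℝ) * B * hB.eigenvectorUnitary
      = diagonal hB.eigenvalues := by
  simpa using hB.conjStarAlgAut_star_eigenvectorUnitary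

lemma det_one_add_vecMulVec {R : Type*} [CommRing R] (u v : ι → R) :
    (1 + vecMulVec u v).det = 1 + v ⬝ᵥ u := by
  rw [vecMulVec_eq (Fin 1), det_one_add_replicateCol_mul_replicateRow]

lemma det_diagonal_add_vecMulVec {K : Type*} [Field K] {d : ι → K} (hd : ∀ i, d i ≠ 0)
    (u v : ι → K) :
    (diagonal d + vecMulVec u v).det
      = ∏ i, d i + ∑ i, u i * v i * ∏ l ∈ Finset.univ.erase i, d l := by
  have h : diagonal d + vecMulVec u v
      = diagonal d * (1 + vecMulVec (fun i => (d i)⁻¹ * u i) v) := by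
    rw [Matrix.mul_add, Matrix.mul_one, mul_vecMulVec]
    congr
    ext i
    simp [mulVec_diagonal, hd]
  rw [h, det_mul, det_diagonal, det_one_add_vecMulVec, mul_add, mul_one, dotProduct,
    Finset.mul_sum]
  congr 1
  refine Finset.sum_congr rfl fun i _ => ?_
  rw [← Finset.mul_prod_erase _ _ (Finset.mem_univ i)]
  field_simp [hd i]

lemma one_add_smul_mul_one_add_smul {R : Type*} [CommRing R] {V : Matrix ι ι R} {s : R}
    (hV : V * V = s • V) (a b : R) :
    (1 + a • V) * (1 + b • V) = 1 + (a + b + a * b * s) • V := by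
  rw [Matrix.add_mul, Matrix.mul_add, Matrix.mul_add, Matrix.one_mul, Matrix.mul_one,
    Matrix.one_mul, Matrix.smul_mul, Matrix.mul_smul, hV, smul_smul, smul_smul]
  module

variable {p : ι → ℝ} {w : ℝ}

lemma gammaMat_mul_one_add_mul_gammaMat (hw : 0 < w) (hp : p ⬝ᵥ p = w ^ 2 - 1) :
    gammaMat p w * (1 + vecMulVec p p) * gammaMat p w = 1 := by
  have hV : vecMulVec p p * vecMulVec p p = (w ^ 2 - 1) • vecMulVec p p := by
    rw [vecMulVec_mul_vecMulVec, hp, vecMulVec_smul]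
  have hG : gammaMat p w = 1 + (-(w * (1 + w))⁻¹) • vecMulVec p p := by
    rw [gammaMat, neg_smul, sub_eq_add_neg]
  have h1 : 1 + vecMulVec p p = 1 + (1 : ℝ) • vecMulVec p p := by rw [one_smul]
  rw [hG, h1, one_add_smul_mul_one_add_smul hV, one_add_smul_mul_one_add_smul hV, add_eq_left]
  refine smul_eq_zero_of_left ?_ _
  have : 1 + w ≠ 0 := by positivity
  field_simp
  ring

lemma det_gammaMat (hw : 0 < w) (hp : p ⬝ᵥ p = w ^ 2 - 1) : (gammaMat p w).det = w⁻¹ := by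
  rw [gammaMat, sub_eq_add_neg, ← neg_smul, ← smul_vecMulVec, det_one_add_vecMulVec,
    dotProduct_smul, hp, smul_eq_mul]
  have : 1 + w ≠ 0 := by positivity
  field_simp
  ring

lemma sq_mul_prod_add_eigenvalues_gammaMat_conj {B : Matrix ι ι ℝ} (hB : B.IsHermitian)
    (hA : (gammaMat p w * B * gammaMat p w).IsHermitian) (hw : 0 < w)
    (hp : p ⬝ᵥ p = w ^ 2 - 1) {t : ℝ} (ht : ∀ i, t + hB.eigenvalues i ≠ 0) :
    w ^ 2 * ∏ i, (t + hA.eigenvalues i) = ∏ i, (t + hB.eigenvalues i)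
      + t * ∑ i, (p ᵥ* (hB.eigenvectorUnitary : Matrix ι ι ℝ)) i ^ 2
          * ∏ l ∈ Finset.univ.erase i, (t + hB.eigenvalues l) := by
  set U : Matrix ι ι ℝ := (hB.eigenvectorUnitary : Matrix ι ι ℝ)
  set q := p ᵥ* U
  set M := t • (1 + vecMulVec p p) + B
  have hUU : star U * U = 1 := Unitary.coe_star_mul_self _
  have hconj : t • 1 + gammaMat p w * B * gammaMat p w = gammaMat p w * M * gammaMat p w := by
    rw [Matrix.mul_add, Matrix.add_mul, Matrix.mul_smul, Matrix.smul_mul,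
      gammaMat_mul_one_add_mul_gammaMat hw hp]
  have hdiag : star U * M * U = diagonal (fun i => t + hB.eigenvalues i) + vecMulVec (t • q) q := by
    rw [Matrix.mul_add, Matrix.add_mul, hB.star_eigenvectorUnitary_mul_mul, Matrix.mul_smul,
      Matrix.smul_mul, Matrix.mul_add, Matrix.add_mul, Matrix.mul_one, hUU, mul_vecMulVec,
      vecMulVec_mul, star_eq_conjTranspose, conjTranspose_eq_transpose_of_trivial,
      mulVec_transpose]
    ext i j
    by_cases hij : i = j
    · simp [vecMulVec_apply, hij, q]
      ring
    · simp [vecMulVec_apply, one_apply_ne hij, hij, q]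
  have hdetU : (star U * M * U).det = M.det := by
    rw [det_mul, det_mul, mul_right_comm, ← det_mul, hUU, det_one, one_mul]
  have hw2 : w ^ 2 * (w⁻¹ * M.det * w⁻¹) = M.det := by
    field_simp
  rw [← hA.det_smul_one_add, hconj, det_mul, det_mul, det_gammaMat hw hp, hw2, ← hdetU, hdiag,
    det_diagonal_add_vecMulVec ht, Finset.mul_sum]
  congr 1
  refine Finset.sum_congr rfl fun i _ => ?_
  simp only [Pi.smul_apply, smul_eq_mul]
  ring

end GammaConjugation

theorem sq_mul_esym_eigenvalues_gammaMat_conj {n : ℕ} {B : Matrix (Fin n) (Fin n) ℝ}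
    (hB : B.IsHermitian) {p : Fin n → ℝ} {w : ℝ}
    (hA : (gammaMat p w * B * gammaMat p w).IsHermitian) (hw : 0 < w)
    (hp : p ⬝ᵥ p = w ^ 2 - 1) :
    ∃ q : Fin n → ℝ, ∀ j < n, w ^ 2 * esym n j hA.eigenvalues
      = esym n j hB.eigenvalues + ∑ i, q i ^ 2 * esymErase n i j hB.eigenvalues := by
  set β := hB.eigenvalues
  set q := p ᵥ* (hB.eigenvectorUnitary : Matrix (Fin n) (Fin n) ℝ)
  refine ⟨q, fun j hj => ?_⟩
  have hpoly : C (w ^ 2) * ∏ i, (X + C (hA.eigenvalues i)) = ∏ i, (X + C (β i))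
      + X * ∑ i, C (q i ^ 2) * ∏ l ∈ Finset.univ.erase i, (X + C (β l)) := by
    refine eq_of_infinite_eval_eq _ _
      ((Set.finite_range (-β)).infinite_compl.mono fun t ht => ?_)
    have ht' : ∀ i, t + β i ≠ 0 := fun i h => ht ⟨i, by simp; linarith⟩
    simp [eval_prod, eval_finsetSum, sq_mul_prod_add_eigenvalues_gammaMat_conj hB hA hw hp ht']
    rfl
  have hcoeff := congrArg (coeff · (n - j)) hpoly
  simp only [coeff_C_mul, coeff_add, coeff_prod_X_add_C _ (Nat.sub_le n j),
    Nat.sub_sub_self hj.le] at hcoeff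
  rw [hcoeff, show n - j = (n - 1 - j) + 1 by omega, coeff_X_mul, finsetSum_coeff]
  simp only [coeff_C_mul, coeff_prod_erase_X_add_C _ _ (Nat.sub_le (n - 1) j),
    Nat.sub_sub_self (Nat.le_sub_one_of_lt hj)]

theorem esym_le_sq_mul_esym_gammaMat_conj {n k : ℕ} (hkn : k < n)
    {B : Matrix (Fin n) (Fin n) ℝ} (hB : B.IsHermitian) {p : Fin n → ℝ} {w : ℝ}
    (hA : (gammaMat p w * B * gammaMat p w).IsHermitian) (hw : 0 < w)
    (hp : p ⬝ᵥ p = w ^ 2 - 1) (hβ : hB.eigenvalues ∈ closure (GCone n (k + 1))) :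
    ∀ j ≤ k, esym n j hB.eigenvalues ≤ w ^ 2 * esym n j hA.eigenvalues := by
  obtain ⟨q, hq⟩ := sq_mul_esym_eigenvalues_gammaMat_conj hB hA hw hp
  intro j hjk
  rw [hq j (by omega)]
  have hβj : hB.eigenvalues ∈ closure (GCone n (j + 1)) :=
    closure_mono (antitone_GCone (by omega)) hβ
  exact le_add_of_nonneg_right (Finset.sum_nonneg fun i _ =>
    mul_nonneg (sq_nonneg _) (esymErase_nonneg_of_mem_closure_GCone (by omega) hβj i))

section Graph

variable {n : ℕ} (u : E n → ℝ) (x : E n)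

lemma wgt_pos : 0 < wgt u x :=
  Real.sqrt_pos.2 (by positivity)

lemma dotProduct_pd_self : (fun i => pd u i x) ⬝ᵥ (fun i => pd u i x) = wgt u x ^ 2 - 1 := by
  rw [wgt, Real.sq_sqrt (by positivity)]
  simp [dotProduct, sq]

lemma gam_eq_gammaMat : gam u x = gammaMat (fun i => pd u i x) (wgt u x) := by
  ext i j
  simp only [gam, gammaMat, of_apply, Matrix.sub_apply, Matrix.smul_apply, vecMulVec_apply,
    Matrix.one_apply, smul_eq_mul]
  ring

end Graph

theorem stmt8_general (n k : ℕ) (hkn : k < n)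
    (Ω : Set (E n))
    (u v : E n → ℝ)
    (hconv : ∀ x ∈ Ω, EigsIn (hess v x) (closure (GCone n (k + 1)))) :
    ∀ x ∈ Ω,
      ∃ (hA : (gam u x * hess v x * gam u x).IsHermitian) (hB : (hess v x).IsHermitian),
        hA.eigenvalues ∈ closure (GCone n k) ∧
        ∀ j, 1 ≤ j → j ≤ k →
          ((wgt u x) ^ 2)⁻¹ * esym n j hB.eigenvalues ≤ esym n j hA.eigenvalues := by
  intro x hx
  obtain ⟨hB, hβ⟩ := hconv x hx
  rw [gam_eq_gammaMat]
  have hA := hB.gammaMat_mul_mul (fun i => pd u i x) (wgt u x)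
  have hw := wgt_pos u x
  have hle := esym_le_sq_mul_esym_gammaMat_conj hkn hB hA hw (dotProduct_pd_self u x) hβ
  refine ⟨hA, hB, mem_closure_GCone hkn.le fun j _ hjk => ?_, fun j _ hjk => ?_⟩
  · exact nonneg_of_mul_nonneg_right
      ((esym_nonneg_of_mem_closure_GCone hβ (by omega)).trans (hle j hjk)) (by positivity)
  · rw [inv_mul_le_iff₀ (by positivity)]
    exact hle j hjk

/-- **Lemma 3.1 of Ivochkina / Lemma 2.4.** If `v ∈ C²(Ω)` is `(k+1)`-convex and `u ∈ C²(Ω)`,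
then at every `x ∈ Ω` the symmetric matrix `γ (D²v) γ` (which represents `∇²v − ν(v)h` on the
graph of `u`) has eigenvalue vector in `Γ̄_k` and satisfies
`σ_j(λ(γ (D²v) γ)) ≥ w⁻² σ_j(λ(D²v))` for `j = 1,…,k`. -/
theorem stmt8 (n k : ℕ) (hk1 : 1 ≤ k) (hkn : k < n)
    (Ω : Set (E n)) (hΩ : IsOpen Ω)
    (u v : E n → ℝ)
    (hu : ContDiffOn ℝ 2 u Ω) (hv : ContDiffOn ℝ 2 v Ω)
    (hconv : ∀ x ∈ Ω, EigsIn (hess v x) (closure (GCone n (k + 1)))) :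
    ∀ x ∈ Ω,
      ∃ (hA : (gam u x * hess v x * gam u x).IsHermitian) (hB : (hess v x).IsHermitian),
        hA.eigenvalues ∈ closure (GCone n k) ∧
        ∀ j, 1 ≤ j → j ≤ k →
          ((wgt u x) ^ 2)⁻¹ * esym n j hB.eigenvalues ≤ esym n j hA.eigenvalues :=
  stmt8_general n k hkn Ω u v hconv
end
end

section
/- Let k ≥ 2 be an integer, let D ⊂ ℝ^N be a bounded domain, let ψ ∈ C^2(D̄) be nonnegative, and set f = ψ^{k−1}. Then there is a constant C depending only on k, sup_D ψ, sup_D |Dψ|, sup_D λ_max(D^2 ψ), and the diameter of D, such that for every x ∈ D with f(x) > 0: |Df(x)|² / f(x) ≤ (C / dist(x, ∂D)²) · f(x)^{1 − 1/(k−1)}. -/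
open scoped BigOperators Topology
open MeasureTheory

noncomputable section

/-!
If `ψ ≥ 0` and `D²ψ ≤ M` on the ball of radius `d = dist(x, ∂D)` around `x`, Taylor's formula
along the direction of steepest descent gives `0 ≤ ψ(x) - |Dψ(x)| t + M t² / 2` for `0 ≤ t < d`,
and choosing `t` well yields `|Dψ(x)|² d² ≤ 2 M d² ψ(x) + 16 ψ(x)²`. Since
`Df = (k - 1) ψ^{k-2} Dψ`, `f^{1 - 1/(k-1)} = ψ^{k-2}` and `d ≤ diam D`, the claim holds with
`C = (k - 1)² (2 M³ + 16 M)`.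
-/

open Set Metric

theorem image_le_taylor_two_of_deriv2_le {φ φ' φ'' : ℝ → ℝ} {t M : ℝ} (ht : 0 ≤ t)
    (hφ : ∀ s ∈ Icc 0 t, HasDerivAt φ (φ' s) s) (hφ' : ∀ s ∈ Icc 0 t, HasDerivAt φ' (φ'' s) s)
    (hM : ∀ s ∈ Icc 0 t, φ'' s ≤ M) :
    φ t ≤ φ 0 + φ' 0 * t + M / 2 * t ^ 2 := by
  have hφ'_le : ∀ s ∈ Icc 0 t, φ' s ≤ φ' 0 + M * s :=
    image_le_of_deriv_right_le_deriv_boundary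
      (fun s hs => (hφ' s hs).continuousAt.continuousWithinAt)
      (fun s hs => (hφ' s (Ico_subset_Icc_self hs)).hasDerivWithinAt) (by simp)
      (by fun_prop) (fun s _ => (((hasDerivAt_id s).const_mul M).const_add _).hasDerivWithinAt)
      fun s hs => by simpa using hM s (Ico_subset_Icc_self hs)
  have hquad : ∀ s, HasDerivAt (fun s => φ 0 + φ' 0 * s + M / 2 * s ^ 2) (φ' 0 + M * s) s :=
    fun s => ((((hasDerivAt_id' s).const_mul (φ' 0)).const_add (φ 0)).add
      ((hasDerivAt_pow 2 s).const_mul (M / 2))).congr_deriv (by push_cast; ring)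
  exact image_le_of_deriv_right_le_deriv_boundary
    (fun s hs => (hφ s hs).continuousAt.continuousWithinAt)
    (fun s hs => (hφ s (Ico_subset_Icc_self hs)).hasDerivWithinAt) (by simp)
    (by fun_prop) (fun s _ => (hquad s).hasDerivWithinAt)
    (fun s hs => hφ'_le s (Ico_subset_Icc_self hs)) (right_mem_Icc.2 ht)

theorem image_add_smul_le_of_fderiv_fderiv_le {F : Type*} [NormedAddCommGroup F]
    [NormedSpace ℝ F] {U : Set F} (hU : IsOpen U) {ψ : F → ℝ} (hψ : ContDiffOn ℝ 2 ψ U)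
    {x v : F} {t M : ℝ} (ht : 0 ≤ t) (hseg : ∀ s ∈ Icc 0 t, x + s • v ∈ U)
    (hM : ∀ s ∈ Icc 0 t, fderiv ℝ (fderiv ℝ ψ) (x + s • v) v v ≤ M) :
    ψ (x + t • v) ≤ ψ x + fderiv ℝ ψ x v * t + M / 2 * t ^ 2 := by
  have hline : ∀ s : ℝ, HasDerivAt (fun s : ℝ => x + s • v) v s := fun s => by
    simpa using ((hasDerivAt_id s).smul_const v).const_add x
  have hψ' : ContDiffOn ℝ 1 (fderiv ℝ ψ) U := hψ.fderiv_of_isOpen hU (by norm_num)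
  have hφ : ∀ s ∈ Icc 0 t,
      HasDerivAt (fun s => ψ (x + s • v)) (fderiv ℝ ψ (x + s • v) v) s := fun s hs =>
    ((hψ.differentiableOn (by norm_num)).differentiableAt
      (hU.mem_nhds (hseg s hs))).hasFDerivAt.comp_hasDerivAt s (hline s)
  have hφ' : ∀ s ∈ Icc 0 t, HasDerivAt (fun s => fderiv ℝ ψ (x + s • v) v)
      (fderiv ℝ (fderiv ℝ ψ) (x + s • v) v v) s := fun s hs => by
    have h := ((hψ'.differentiableOn one_ne_zero).differentiableAt
      (hU.mem_nhds (hseg s hs))).hasFDerivAt.comp_hasDerivAt s (hline s)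
    have h2 := h.clm_apply (hasDerivAt_const s v)
    simp only [map_zero, add_zero, Function.comp_apply] at h2
    exact h2
  have h := image_le_taylor_two_of_deriv2_le ht hφ hφ' hM
  simp only [zero_smul, add_zero] at h
  exact h

theorem sq_mul_sq_le_of_forall_mul_le_add_sq {G d a M : ℝ} (hM : 0 < M) (hG : 0 ≤ G)
    (hd : 0 ≤ d) (ha : 0 ≤ a) (h : ∀ t ∈ Ico 0 d, G * t ≤ a + M / 2 * t ^ 2) :
    G ^ 2 * d ^ 2 ≤ 2 * M * d ^ 2 * a + 16 * a ^ 2 := by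
  rcases hd.eq_or_lt with rfl | hd
  · simp only [zero_pow two_ne_zero, mul_zero, zero_mul, zero_add]
    positivity
  -- Take the minimiser `t = G / M` of `a - G t + M t² / 2` if it is at most `d / 2`, else `t = d / 2`.
  rcases le_or_gt G (M * d / 2) with hGd | hGd
  · have hGM : G / M < d := by rw [div_lt_iff₀ hM]; nlinarith
    have h1 := h (G / M) ⟨by positivity, hGM⟩
    have h2 : G ^ 2 ≤ 2 * M * a := by
      field_simp at h1
      nlinarith
    nlinarith [mul_le_mul_of_nonneg_right h2 (sq_nonneg d), sq_nonneg a]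
  · have h1 := h (d / 2) ⟨by positivity, by linarith⟩
    have h2 : G * d ≤ 4 * a := by nlinarith
    nlinarith [mul_le_mul h2 h2 (by positivity) (by positivity), mul_nonneg hM.le (sq_nonneg d)]

theorem IsOpen.ball_infDist_frontier_subset {F : Type*} [NormedAddCommGroup F] [NormedSpace ℝ F]
    {D : Set F} (hD : IsOpen D) {x : F} (hx : x ∈ D) :
    ball x (infDist x (frontier D)) ⊆ D := by
  rcases le_or_gt (infDist x (frontier D)) 0 with h | h
  · simp [ball_eq_empty.2 h]
  refine (convex_ball x _).isPreconnected.subset_of_closure_inter_subset hD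
    ⟨x, mem_ball_self h, hx⟩ fun y ⟨hyD, hyb⟩ => ?_
  by_contra hy
  exact ball_infDist_subset_compl hyb ⟨hyD, by rwa [hD.interior_eq]⟩

theorem IsOpen.infDist_frontier_pos {F : Type*} [NormedAddCommGroup F] [NormedSpace ℝ F]
    [Nontrivial F] {D : Set F} (hD : IsOpen D) (hDb : Bornology.IsBounded D) {x : F}
    (hx : x ∈ D) : 0 < infDist x (frontier D) := by
  have hfr : (frontier D).Nonempty :=
    nonempty_frontier_iff.2 ⟨⟨x, hx⟩, fun h => NormedSpace.unbounded_univ ℝ F (h ▸ hDb)⟩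
  exact (isClosed_frontier.notMem_iff_infDist_pos hfr).1 fun h => (hD.frontier_eq ▸ h).2 hx

theorem infDist_frontier_le_diam {F : Type*} [PseudoMetricSpace F] {D : Set F}
    (hDb : Bornology.IsBounded D) {x : F} (hx : x ∈ D) : infDist x (frontier D) ≤ diam D := by
  rcases (frontier D).eq_empty_or_nonempty with hfr | ⟨y, hy⟩
  · rw [hfr, infDist_empty]
    exact diam_nonneg
  calc infDist x (frontier D) ≤ dist x y := infDist_le_dist_of_mem hy
    _ ≤ diam (closure D) :=
      dist_le_diam_of_mem hDb.closure (subset_closure hx) (frontier_subset_closure hy)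
    _ = diam D := diam_closure D

theorem EuclideanSpace.clm_apply_eq_sum {N : ℕ} {F : Type*} [NormedAddCommGroup F]
    [NormedSpace ℝ F] (L : E N →L[ℝ] F) (v : E N) :
    L v = ∑ i, v i • L (EuclideanSpace.single i 1) := by
  conv_lhs => rw [← (EuclideanSpace.basisFun (Fin N) ℝ).sum_repr v]
  simp [map_sum, map_smul]

theorem fderiv_apply_eq_inner_gradVec {N : ℕ} (u : E N → ℝ) (x v : E N) :
    fderiv ℝ u x v = inner ℝ (gradVec u x) v := by
  rw [EuclideanSpace.clm_apply_eq_sum, PiLp.inner_apply]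
  simp [gradVec, pd]

theorem sum_hess_mul_mul_eq_fderiv_fderiv {N : ℕ} {u : E N → ℝ} {y : E N}
    (hu : DifferentiableAt ℝ (fderiv ℝ u) y) (v : E N) :
    ∑ i, ∑ j, hess u y i j * v i * v j = fderiv ℝ (fderiv ℝ u) y v v := by
  have hhess : ∀ i j, hess u y i j =
      fderiv ℝ (fderiv ℝ u) y (EuclideanSpace.single i 1) (EuclideanSpace.single j 1) :=
    fun i j => by
      change fderiv ℝ (fun z => fderiv ℝ u z (EuclideanSpace.single j 1)) y _ = _
      rw [fderiv_clm_apply hu (differentiableAt_const _)]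
      simp
  rw [EuclideanSpace.clm_apply_eq_sum (fderiv ℝ (fderiv ℝ u) y) v,
    FunLike.coe_sum, Finset.sum_apply]
  refine Finset.sum_congr rfl fun i _ => ?_
  rw [FunLike.coe_smul, Pi.smul_apply, EuclideanSpace.clm_apply_eq_sum _ v, Finset.smul_sum]
  refine Finset.sum_congr rfl fun j _ => ?_
  rw [hhess]; simp only [smul_eq_mul]; ring

theorem gradVec_pow {N : ℕ} {u : E N → ℝ} {x : E N} (hu : DifferentiableAt ℝ u x) (n : ℕ) :
    gradVec (fun y => u y ^ n) x = (n * u x ^ (n - 1)) • gradVec u x := by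
  ext i
  simp [gradVec, pd, fderiv_fun_pow n hu]

theorem norm_gradVec_sq_mul_infDist_sq_le {N : ℕ} {D : Set (E N)} (hD : IsOpen D)
    {ψ : E N → ℝ} (hψ : ContDiffOn ℝ 2 ψ D) {M : ℝ} (hM : 0 < M) (hψ0 : ∀ y ∈ D, 0 ≤ ψ y)
    (hHess : ∀ y ∈ D, ∀ v : E N, ∑ i, ∑ j, hess ψ y i j * v i * v j ≤ M * ‖v‖ ^ 2)
    {x : E N} (hx : x ∈ D) :
    ‖gradVec ψ x‖ ^ 2 * infDist x (frontier D) ^ 2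
      ≤ 2 * M * infDist x (frontier D) ^ 2 * ψ x + 16 * ψ x ^ 2 := by
  refine sq_mul_sq_le_of_forall_mul_le_add_sq hM (norm_nonneg _) infDist_nonneg (hψ0 x hx) ?_
  rintro t ⟨ht0, htd⟩
  rcases (norm_nonneg (gradVec ψ x)).eq_or_lt with hG | hG
  · rw [← hG, zero_mul]
    have := hψ0 x hx
    positivity
  set v : E N := (-‖gradVec ψ x‖⁻¹) • gradVec ψ x
  have hv : ‖v‖ = 1 := by
    rw [norm_smul, norm_neg, norm_inv, norm_norm, inv_mul_cancel₀ hG.ne']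
  have hseg : ∀ s ∈ Icc 0 t, x + s • v ∈ D := fun s hs =>
    hD.ball_infDist_frontier_subset hx <| by
      rw [mem_ball, dist_eq_norm, add_sub_cancel_left, norm_smul, hv, mul_one,
        Real.norm_of_nonneg hs.1]
      exact hs.2.trans_lt htd
  have hψ' : DifferentiableOn ℝ (fderiv ℝ ψ) D :=
    (hψ.fderiv_of_isOpen hD (by norm_num : (1 : WithTop ℕ∞) + 1 ≤ 2)).differentiableOn
      one_ne_zero
  have hB : ∀ s ∈ Icc 0 t, fderiv ℝ (fderiv ℝ ψ) (x + s • v) v v ≤ M := fun s hs => by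
    rw [← sum_hess_mul_mul_eq_fderiv_fderiv ((hψ' _ (hseg s hs)).differentiableAt
      (hD.mem_nhds (hseg s hs)))]
    simpa [hv] using hHess _ (hseg s hs) v
  have hslope : fderiv ℝ ψ x v = -‖gradVec ψ x‖ := by
    rw [fderiv_apply_eq_inner_gradVec, inner_smul_right, real_inner_self_eq_norm_sq]
    field_simp
  have htaylor := image_add_smul_le_of_fderiv_fderiv_le hD hψ ht0 hseg hB
  rw [hslope] at htaylor
  linarith [hψ0 _ (hseg t (right_mem_Icc.2 ht0))]

theorem rpow_one_sub_inv_pow_succ {a : ℝ} (ha : 0 ≤ a) (n : ℕ) :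
    (a ^ (n + 1)) ^ (1 - 1 / ((n : ℝ) + 1)) = a ^ n := by
  rw [← Real.rpow_natCast, ← Real.rpow_mul ha, ← Real.rpow_natCast]
  congr 1
  push_cast
  field_simp
  ring

/-- For `k ≥ 2`, a bounded domain `D ⊂ ℝ^N`, nonnegative `ψ ∈ C²(D̄)` and `f = ψ^{k-1}`:
there is `C` depending only on `k` and on bounds `M` for `sup ψ`, `sup |Dψ|`,
`sup λ_max(D²ψ)` and `diam D`, such that
`|Df(x)|²/f(x) ≤ (C/dist(x,∂D)²) f(x)^{1-1/(k-1)}` wherever `f(x) > 0`. -/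
theorem stmt16 (k : ℕ) (hk : 2 ≤ k) (M : ℝ) (hM : 0 < M) :
    ∃ C > (0:ℝ), ∀ (N : ℕ) (D : Set (E N)) (ψ : E N → ℝ),
      IsOpen D → IsConnected D → Bornology.IsBounded D →
      ContDiffOn ℝ 2 ψ (closure D) →
      (∀ x ∈ closure D, 0 ≤ ψ x) →
      (∀ x ∈ D, ψ x ≤ M) →
      (∀ x ∈ D, ‖gradVec ψ x‖ ≤ M) →
      (∀ y ∈ D, ∀ v : E N, ∑ i, ∑ j, hess ψ y i j * v i * v j ≤ M * ‖v‖ ^ 2) →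
      Metric.diam D ≤ M →
      ∀ x ∈ D, 0 < (ψ x) ^ (k - 1) →
        ‖gradVec (fun y => (ψ y) ^ (k - 1)) x‖ ^ 2 / (ψ x) ^ (k - 1)
          ≤ C / Metric.infDist x (frontier D) ^ 2 *
              ((ψ x) ^ (k - 1)) ^ (1 - 1 / ((k : ℝ) - 1)) := by
  obtain ⟨n, rfl⟩ : ∃ n, k = n + 2 := ⟨k - 2, by omega⟩
  refine ⟨((n : ℝ) + 1) ^ 2 * (2 * M ^ 3 + 16 * M), by positivity, ?_⟩
  intro N D ψ hD _ hDb hψ hψ0 hψM _ hHess hdiam x hx hfx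
  have hψx : 0 ≤ ψ x := hψ0 x (subset_closure hx)
  have hcast : ((n + 2 : ℕ) : ℝ) - 1 = n + 1 := by push_cast; ring
  rw [show n + 2 - 1 = n + 1 from rfl] at hfx ⊢
  rw [hcast, rpow_one_sub_inv_pow_succ hψx]
  -- In `ℝ⁰` the frontier is empty and `infDist` to it is `0`, but then `Df = 0`.
  rcases subsingleton_or_nontrivial (E N) with hE | hE
  · rw [Subsingleton.elim (gradVec _ x) 0, norm_zero, zero_pow two_ne_zero, zero_div]
    positivity
  set d := infDist x (frontier D)
  have hd : 0 < d := hD.infDist_frontier_pos hDb hx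
  have hdM : d ≤ M := (infDist_frontier_le_diam hDb hx).trans hdiam
  have hgrad : ‖gradVec ψ x‖ ^ 2 * d ^ 2 ≤ (2 * M ^ 3 + 16 * M) * ψ x := by
    have h := norm_gradVec_sq_mul_infDist_sq_le hD (hψ.mono subset_closure) hM
      (fun y hy => hψ0 y (subset_closure hy)) hHess hx
    nlinarith [mul_le_mul_of_nonneg_left (pow_le_pow_left₀ hd.le hdM 2)
      (by positivity : 0 ≤ 2 * M * ψ x), mul_le_mul_of_nonneg_left (hψM x hx) hψx]
  have hdiff : DifferentiableAt ℝ ψ x := ((hψ.mono subset_closure).differentiableOn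
    (by norm_num)).differentiableAt (hD.mem_nhds hx)
  rw [gradVec_pow hdiff, Nat.add_sub_cancel, norm_smul, Real.norm_of_nonneg (by positivity),
    div_le_iff₀ hfx]
  calc ((n + 1 : ℕ) * ψ x ^ n * ‖gradVec ψ x‖) ^ 2
      = ((n : ℝ) + 1) ^ 2 * ψ x ^ (2 * n) * (‖gradVec ψ x‖ ^ 2 * d ^ 2) / d ^ 2 := by
        field_simp; push_cast; ring
    _ ≤ ((n : ℝ) + 1) ^ 2 * ψ x ^ (2 * n) * ((2 * M ^ 3 + 16 * M) * ψ x) / d ^ 2 := by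
        gcongr
    _ = _ := by ring
end
end
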